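/- Let 0 ≤ r₀ < r < 1, |α| ≤ r₀, k = (r + r₀)/(r − r₀), and let g be a continuous function on the circle |z| = r with values in ℂ. Define m(r, g) = (1/2π)∫₀^{2π} log⁺|g(re^{iθ})| dθ and let ψ_α(z) = r²(z − α)/(r² − ᾱz). Then (1/k)·m(r, g) ≤ m(r, g ∘ ψ_α) ≤ k·m(r, g). -/

import Mathlib

/-!
On the circle `|z| = r` the map `ψ_α` only reparametrises angles: `ψ_α(r e^{iθ}) = r e^{i h(θ)}`
with `h(θ) = θ - 2 arg (r - ᾱ e^{iθ})`. The function `h` gains exactly `2π` over a period, and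
its derivative is the Poisson kernel `(r² - |α|²) / |r e^{iθ} - α|²`, which lies between
`(r - |α|)/(r + |α|)` and `(r + |α|)/(r - |α|)`, hence in `[1/k, k]`. Substituting `φ = h(θ)` in
the nonnegative `2π`-periodic integrand `log⁺ |g(r e^{iφ})|` compares the two integrals up to
the factor `k`.
-/

noncomputable def logPlus (x : ℝ) : ℝ := max (Real.log x) 0

noncomputable def psiMap (r : ℝ) (α : ℂ) (z : ℂ) : ℂ :=
  (r : ℂ) ^ 2 * (z - α) / ((r : ℂ) ^ 2 - (starRingEnd ℂ) α * z)

/-- The proximity integral of `g` over the circle of radius `r`. -/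
noncomputable def proxm (r : ℝ) (g : ℂ → ℂ) : ℝ :=
  (1 / (2 * Real.pi)) *
    ∫ θ in (0:ℝ)..(2 * Real.pi),
      logPlus ‖g ((r : ℂ) * Complex.exp ((θ : ℂ) * Complex.I))‖

open Complex Function intervalIntegral ComplexConjugate
open scoped Real

theorem Function.Periodic.integral_comp_bounds_of_deriv_bounds {f h h' : ℝ → ℝ} {T k : ℝ}
    (hf_per : Periodic f T) (hk : 0 < k) (hT : 0 ≤ T) (hf : Continuous f)
    (hf_nonneg : ∀ x, 0 ≤ f x)
    (hh : ∀ x ∈ Set.uIcc 0 T, HasDerivAt h (h' x) x) (hh' : ContinuousOn h' (Set.uIcc 0 T))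
    (h_shift : h T = h 0 + T) (hh'_mem : ∀ x ∈ Set.uIcc 0 T, h' x ∈ Set.Icc (1 / k) k) :
    1 / k * ∫ x in 0..T, f x ≤ ∫ x in 0..T, f (h x) ∧
      ∫ x in 0..T, f (h x) ≤ k * ∫ x in 0..T, f x := by
  have hfh : ContinuousOn (fun x => f (h x)) (Set.uIcc 0 T) :=
    hf.comp_continuousOn fun x hx => (hh x hx).continuousAt.continuousWithinAt
  have h_subst : ∫ x in 0..T, f (h x) * h' x = ∫ x in 0..T, f x :=
    calc ∫ x in 0..T, f (h x) * h' x = ∫ x in h 0..h 0 + T, f x := by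
          rw [← h_shift]; exact integral_comp_mul_deriv hh hh' hf
      _ = ∫ x in 0..T, f x := by simpa using hf_per.intervalIntegral_add_eq (h 0) 0
  have h_lower : ∫ x in 0..T, 1 / k * f (h x) ≤ ∫ x in 0..T, f (h x) * h' x :=
    integral_mono_on hT (continuousOn_const.mul hfh).intervalIntegrable
      (hfh.mul hh').intervalIntegrable
      fun x hx => by
        rw [mul_comm]
        exact mul_le_mul_of_nonneg_left (hh'_mem x (Set.Icc_subset_uIcc hx)).1 (hf_nonneg _)
  have h_upper : ∫ x in 0..T, f (h x) * h' x ≤ ∫ x in 0..T, k * f (h x) :=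
    integral_mono_on hT (hfh.mul hh').intervalIntegrable
      (continuousOn_const.mul hfh).intervalIntegrable
      fun x hx => by
        rw [mul_comm k]
        exact mul_le_mul_of_nonneg_left (hh'_mem x (Set.Icc_subset_uIcc hx)).2 (hf_nonneg _)
  rw [h_subst, integral_const_mul] at h_lower h_upper
  rw [one_div_mul_eq_div, div_le_iff₀' hk] at h_lower
  rw [one_div_mul_eq_div, div_le_iff₀' hk]
  exact ⟨h_upper, h_lower⟩

theorem Complex.conj_div_self_eq_exp_arg {w : ℂ} (hw : w ≠ 0) :
    conj w / w = exp (-(2 * arg w) * I) := by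
  have hn : (‖w‖ : ℂ) ≠ 0 := by simpa using hw
  conv_lhs => rw [← norm_mul_exp_arg_mul_I w]
  rw [map_mul, conj_ofReal, ← exp_conj, map_mul, conj_ofReal, conj_I, mul_div_mul_left _ _ hn,
    ← Complex.exp_sub]
  ring_nf

theorem circleMap_sub_eq_exp_mul_conj (r : ℝ) (α : ℂ) (θ : ℝ) :
    circleMap 0 r θ - α = exp (θ * I) * conj ((r : ℂ) - conj α * exp (θ * I)) := by
  have h : exp (θ * I) * conj (exp (θ * I)) = 1 := by
    rw [← exp_conj, ← Complex.exp_add, map_mul, conj_ofReal, conj_I]; simp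
  rw [circleMap_zero, map_sub, map_mul, conj_conj, conj_ofReal]
  linear_combination α * h

theorem add_div_sub_le_add_div_sub {r a b : ℝ} (ha : 0 ≤ a) (hab : a ≤ b) (hb : b < r) :
    (r + a) / (r - a) ≤ (r + b) / (r - b) := by
  rw [div_le_div_iff₀ (by linarith) (by linarith)]
  nlinarith

-- `ψ_α(r e^{iθ}) = r e^{iθ} · w̄ / w` for `w = r - ᾱ e^{iθ}`, and `w̄ / w = e^{-2i arg w}`.
noncomputable def boundaryAngle (r : ℝ) (α : ℂ) (θ : ℝ) : ℝ :=
  θ - 2 * arg (r - conj α * exp (θ * I))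

theorem boundaryAngle_add_two_pi (r : ℝ) (α : ℂ) (θ : ℝ) :
    boundaryAngle r α (θ + 2 * π) = boundaryAngle r α θ + 2 * π := by
  have h : exp (((θ + 2 * π : ℝ) : ℂ) * I) = exp (θ * I) := by
    rw [ofReal_add, add_mul, Complex.exp_add]; push_cast; rw [exp_two_pi_mul_I, mul_one]
  rw [boundaryAngle, boundaryAngle, h]
  ring

theorem logPlus_eq_posLog (x : ℝ) : logPlus x = log⁺ x := max_comm _ _

theorem proxm_eq_integral_posLog (r : ℝ) (g : ℂ → ℂ) :
    proxm r g = 1 / (2 * π) * ∫ θ in 0..2 * π, log⁺ ‖g (circleMap 0 r θ)‖ := by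
  simp only [proxm, logPlus_eq_posLog, circleMap_zero]

section

variable {r : ℝ} {α : ℂ}

theorem re_sub_conj_mul_exp_pos (hα : ‖α‖ < r) (θ : ℝ) :
    0 < ((r : ℂ) - conj α * exp (θ * I)).re := by
  have h := (conj α * exp (θ * I)).re_le_norm
  rw [norm_mul, RCLike.norm_conj, norm_exp_ofReal_mul_I, mul_one] at h
  simp only [sub_re, ofReal_re]
  linarith

theorem poissonKernel_circleMap (hr : 0 ≤ r) (θ : ℝ) :
    poissonKernel 0 α (circleMap 0 r θ) =
      (r ^ 2 - ‖α‖ ^ 2) / ‖(r : ℂ) - conj α * exp (θ * I)‖ ^ 2 := by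
  rw [poissonKernel_def, sub_zero, sub_zero, circleMap_sub_eq_exp_mul_conj r α, norm_mul,
    norm_exp_ofReal_mul_I, one_mul, RCLike.norm_conj, norm_circleMap_zero, abs_of_nonneg hr]

theorem hasDerivAt_boundaryAngle (hα : ‖α‖ < r) (θ : ℝ) :
    HasDerivAt (boundaryAngle r α) (poissonKernel 0 α (circleMap 0 r θ)) θ := by
  have hw : HasDerivAt (fun θ : ℝ => (r : ℂ) - conj α * exp (θ * I))
      (-(conj α * exp (θ * I) * I)) θ := by
    simpa [mul_assoc] using
      (((hasDerivAt_id θ).ofReal_comp.mul_const I).cexp.const_mul (conj α)).const_sub (r : ℂ)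
  have hre := re_sub_conj_mul_exp_pos hα θ
  have harg := imCLM.hasFDerivAt.comp_hasDerivAt θ
    (hw.clog_real (mem_slitPlane_iff.2 (Or.inl hre)))
  simp only [comp_def, imCLM_apply, log_im] at harg
  refine ((hasDerivAt_id θ).sub (harg.const_mul 2)).congr_deriv ?_
  have hα_norm : ‖α‖ = ‖conj α * exp (θ * I)‖ := by
    rw [norm_mul, RCLike.norm_conj, norm_exp_ofReal_mul_I, mul_one]
  rw [poissonKernel_circleMap ((norm_nonneg α).trans hα.le), hα_norm]
  set c := conj α * exp (θ * I)
  simp only [sub_re, ofReal_re] at hre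
  have hn : 0 < (r - c.re) * (r - c.re) + c.im * c.im :=
    add_pos_of_pos_of_nonneg (mul_pos hre hre) (mul_self_nonneg _)
  simp only [div_im, neg_re, neg_im, mul_re, mul_im, I_re, I_im, sub_re, sub_im, ofReal_re,
    ofReal_im, Complex.sq_norm, normSq_apply]
  field_simp
  ring

theorem continuous_poissonKernel_circleMap (hα : ‖α‖ < r) :
    Continuous fun θ => poissonKernel 0 α (circleMap 0 r θ) := by
  rw [poissonKernel_eq_re_herglotzRieszKernel]
  exact (continuous_re.comp_continuousOn (continuousOn_herglotzRieszKernel_sphere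
    (mem_ball_zero_iff.2 hα))).comp_continuous (continuous_circleMap 0 r)
    (circleMap_mem_sphere' 0 r)

theorem poissonKernel_circleMap_mem_Icc {r₀ : ℝ} (h1 : r₀ < r) (hα : ‖α‖ ≤ r₀) (θ : ℝ) :
    poissonKernel 0 α (circleMap 0 r θ) ∈
      Set.Icc (1 / ((r + r₀) / (r - r₀))) ((r + r₀) / (r - r₀)) := by
  have hα_lt : ‖α‖ < r := hα.trans_lt h1
  have hz : circleMap 0 r θ ∈ Metric.sphere 0 r :=
    circleMap_mem_sphere 0 ((norm_nonneg α).trans hα_lt.le) θ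
  have hw : α ∈ Metric.ball 0 r := mem_ball_zero_iff.2 hα_lt
  have hP : poissonKernel 0 α (circleMap 0 r θ) =
      ((circleMap 0 r θ - 0 + (α - 0)) / (circleMap 0 r θ - 0 - (α - 0))).re := by
    rw [poissonKernel_eq_re_herglotzRieszKernel]; rfl
  have hmono := add_div_sub_le_add_div_sub (norm_nonneg α) hα h1
  have hpos : 0 < (r + ‖α‖) / (r - ‖α‖) := div_pos (by linarith [norm_nonneg α]) (by linarith)
  constructor
  · calc 1 / ((r + r₀) / (r - r₀)) ≤ 1 / ((r + ‖α‖) / (r - ‖α‖)) :=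
          one_div_le_one_div_of_le hpos hmono
      _ = (r - ‖α‖) / (r + ‖α‖) := one_div_div _ _
      _ ≤ poissonKernel 0 α (circleMap 0 r θ) := by
          simpa only [hP, sub_zero] using le_re_herglotzRieszKernel hz hw
  · refine le_trans ?_ hmono
    simpa only [hP, sub_zero] using re_herglotzRieszKernel_le hz hw

theorem psiMap_circleMap (hα : ‖α‖ < r) (θ : ℝ) :
    psiMap r α (circleMap 0 r θ) = circleMap 0 r (boundaryAngle r α θ) := by
  have hr : (r : ℂ) ≠ 0 := ofReal_ne_zero.2 (by linarith [norm_nonneg α])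
  have hnum := circleMap_sub_eq_exp_mul_conj r α θ
  have hw0 : (r : ℂ) - conj α * exp (θ * I) ≠ 0 := fun h => by
    simpa [h] using re_sub_conj_mul_exp_pos hα θ
  rw [circleMap_zero] at hnum ⊢
  set e := exp (θ * I) with he
  set w := (r : ℂ) - conj α * e with hw
  have hden : (r : ℂ) ^ 2 - conj α * (r * e) = r * w := by ring
  have hangle : ((boundaryAngle r α θ : ℝ) : ℂ) * I = θ * I + -(2 * arg w) * I := by
    simp only [boundaryAngle, ofReal_sub, ofReal_mul, ofReal_ofNat, ← he, ← hw]; ring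
  rw [circleMap_zero, psiMap, hnum, hden, hangle, Complex.exp_add, ← he,
    ← conj_div_self_eq_exp_arg hw0]
  field_simp

theorem proxm_comp_psiMap (hα : ‖α‖ < r) (g : ℂ → ℂ) :
    proxm r (g ∘ psiMap r α) =
      1 / (2 * π) * ∫ θ in 0..2 * π, log⁺ ‖g (circleMap 0 r (boundaryAngle r α θ))‖ := by
  simp only [proxm_eq_integral_posLog, comp_apply, psiMap_circleMap hα]

end

theorem proxm_comp_psiMap_bounds_general (r₀ r : ℝ) (h1 : r₀ < r)
    (α : ℂ) (hα : ‖α‖ ≤ r₀) (g : ℂ → ℂ)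
    (hg : ContinuousOn g (Metric.sphere (0 : ℂ) r)) :
    (1 / ((r + r₀) / (r - r₀))) * proxm r g ≤ proxm r (g ∘ psiMap r α) ∧
      proxm r (g ∘ psiMap r α) ≤ ((r + r₀) / (r - r₀)) * proxm r g := by
  have hα_lt : ‖α‖ < r := hα.trans_lt h1
  have hr : 0 ≤ r := (norm_nonneg α).trans hα_lt.le
  have hk : 0 < (r + r₀) / (r - r₀) := div_pos (by linarith [norm_nonneg α]) (by linarith)
  have hF : Continuous fun θ => log⁺ ‖g (circleMap 0 r θ)‖ :=
    Real.continuous_posLog.comp <| continuous_norm.comp <|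
      hg.comp_continuous (continuous_circleMap 0 r) (circleMap_mem_sphere 0 hr)
  have hF_per : Periodic (fun θ => log⁺ ‖g (circleMap 0 r θ)‖) (2 * π) :=
    (periodic_circleMap 0 r).comp fun z => log⁺ ‖g z‖
  obtain ⟨h_lower, h_upper⟩ := hF_per.integral_comp_bounds_of_deriv_bounds hk
    Real.two_pi_pos.le hF (fun _ => Real.posLog_nonneg)
    (fun θ _ => hasDerivAt_boundaryAngle hα_lt θ)
    (continuous_poissonKernel_circleMap hα_lt).continuousOn
    (by simpa using boundaryAngle_add_two_pi r α 0)
    (fun θ _ => poissonKernel_circleMap_mem_Icc h1 hα θ)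
  have hc : (0 : ℝ) ≤ 1 / (2 * π) := by positivity
  rw [proxm_eq_integral_posLog, proxm_comp_psiMap hα_lt]
  constructor
  · rw [mul_left_comm]; exact mul_le_mul_of_nonneg_left h_lower hc
  · rw [mul_left_comm]; exact mul_le_mul_of_nonneg_left h_upper hc

theorem proxm_comp_psiMap_bounds (r₀ r : ℝ) (h0 : 0 ≤ r₀) (h1 : r₀ < r) (h2 : r < 1)
    (α : ℂ) (hα : ‖α‖ ≤ r₀) (g : ℂ → ℂ)
    (hg : ContinuousOn g (Metric.sphere (0 : ℂ) r)) :
    (1 / ((r + r₀) / (r - r₀))) * proxm r g ≤ proxm r (g ∘ psiMap r α) ∧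
      proxm r (g ∘ psiMap r α) ≤ ((r + r₀) / (r - r₀)) * proxm r g :=
  proxm_comp_psiMap_bounds_general r₀ r h1 α hα g hg
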